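/- arXiv:1601.03581 — 5 statements merged into one kernel-verified Lean document; each statement's English description precedes it below -/
import Mathlib

section
/- Let V = W ⊕ X ⊕ W′ with Φ a nondegenerate symmetric or antisymmetric bilinear form on V such that W and W′ are totally isotropic, W + W′ is nondegenerate, and X = (W + W′)^⊥. Let n be the linear endomorphism of V determined by linear maps ξ: X → W, ξ′: W′ → X, η: W′ → W via n|_W = id_W, n|_X = id_X + ξ, n|_{W′} = id_{W′} + ξ′ + η. Then n is an isometry of (V, Φ) if and only if ξ′ = −ξ* and η + η* + ξξ* = 0, where ξ*: W′ → X is defined by Φ(ξ*(w′), x) = Φ(w′, ξ(x)) and η*: W′ → W by Φ(η*(w₁′), w₂′) = Φ(w₁′, η(w₂′)). -/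
open LinearMap Function Module

/-- The ambient setup of the paper: `V = W × X × W'` carries a nondegenerate symmetric or
antisymmetric bilinear form `Φ` (over a field of characteristic not two), the subspaces
`W` and `W'` are totally isotropic, and `X` is orthogonal to `W + W'`
(so that `X = (W + W')^⊥`). -/
structure GSSetup (F W X W' : Type) [Field F]
    [AddCommGroup W] [Module F W] [AddCommGroup X] [Module F X]
    [AddCommGroup W'] [Module F W'] : Type where
  Φ : (W × X × W') →ₗ[F] (W × X × W') →ₗ[F] F
  hchar : (2 : F) ≠ 0
  nondeg : ∀ v : W × X × W', (∀ u : W × X × W', Φ v u = 0) → v = 0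
  symm_or_alt : (∀ a b : W × X × W', Φ a b = Φ b a) ∨ (∀ a b : W × X × W', Φ a b = - Φ b a)
  isoW : ∀ w₁ w₂ : W, Φ (w₁, 0, 0) (w₂, 0, 0) = 0
  isoW' : ∀ w₁' w₂' : W', Φ (0, 0, w₁') (0, 0, w₂') = 0
  orthX : ∀ (x : X) (w : W) (w' : W'), Φ (0, x, 0) (w, 0, w') = 0

variable {F W X W' : Type} [Field F]
  [AddCommGroup W] [Module F W] [AddCommGroup X] [Module F X]
  [AddCommGroup W'] [Module F W']

/-- The orthogonal complement, inside `X`, of a subspace `Y ⊆ X` (with respect to the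
restriction of `Φ` to `X`). -/
def perpY (S : GSSetup F W X W') (Y : Submodule F X) : Submodule F X where
  carrier := {x : X | ∀ y ∈ Y, S.Φ (0, x, 0) (0, y, 0) = 0}
  add_mem' := by
    intro a b ha hb y hy
    have h : ((0 : W), a + b, (0 : W')) = ((0 : W), a, (0 : W')) + ((0 : W), b, (0 : W')) := by
      simp
    rw [h, map_add, LinearMap.add_apply, ha y hy, hb y hy, add_zero]
  zero_mem' := by
    intro y hy
    show S.Φ 0 (0, y, 0) = 0
    rw [map_zero]
    rfl
  smul_mem' := by
    intro c a ha y hy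
    have h : ((0 : W), c • a, (0 : W')) = c • ((0 : W), a, (0 : W')) := by simp
    rw [h, map_smul, LinearMap.smul_apply, ha y hy, smul_zero]

/-- The map `Ξ : End(X) → End(W)`, `Ξ(A) = ξ ∘ A ∘ ξ⁺` where `ξ⁺ = ξ* ∘ υ` and
`υ = (ξ ξ*)⁻¹` is realised by the equivalence `ue : W ≃ W'`. -/
def Xi (ξ : X →ₗ[F] W) (ξs : W' →ₗ[F] X) (ue : W ≃ₗ[F] W') (A : X →ₗ[F] X) : W →ₗ[F] W :=
  ξ ∘ₗ A ∘ₗ (ξs ∘ₗ ue.toLinearMap)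

/-- The subgroup condition `h ∈ H_Y`: `h` is an isometry of `(X, Φ|_X)` fixing `Y^⊥`
pointwise. -/
def IsHY (S : GSSetup F W X W') (Y : Submodule F X) (h : X ≃ₗ[F] X) : Prop :=
  (∀ x y : X, S.Φ (0, h x, 0) (0, h y, 0) = S.Φ (0, x, 0) (0, y, 0)) ∧
  ∀ x ∈ perpY S Y, h x = x

/-- The form `Ψ_W` on `W`: `Ψ_W(w₁, w₂) = Φ(ξ⁺ w₁, ξ⁺ w₂)` with `ξ⁺ = ξ* ∘ υ = ξs ∘ ue`. -/
def PsiW (S : GSSetup F W X W') (ξs : W' →ₗ[F] X) (ue : W ≃ₗ[F] W') (w₁ w₂ : W) : F :=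
  S.Φ (0, ξs (ue w₁), 0) (0, ξs (ue w₂), 0)


/-- If `Φ a b = 0` then `Φ b a = 0`, since `Φ` is symmetric or antisymmetric. -/
lemma gs_flip (S : GSSetup F W X W') {a b : W × X × W'} (h : S.Φ a b = 0) : S.Φ b a = 0 := by
  rcases S.symm_or_alt with hs | hs
  · rw [hs]; exact h
  · rw [hs, h, neg_zero]

lemma gs_orthX' (S : GSSetup F W X W') (x : X) (w : W) (w' : W') :
    S.Φ (w, 0, w') (0, x, 0) = 0 :=
  gs_flip S (S.orthX x w w')

lemma gs_expand (S : GSSetup F W X W') (w₁ : W) (x₁ : X) (w₁' : W') (w₂ : W) (x₂ : X)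
    (w₂' : W') :
    S.Φ (w₁, x₁, w₁') (w₂, x₂, w₂') =
      S.Φ (w₁, 0, 0) (0, 0, w₂') + S.Φ (0, 0, w₁') (w₂, 0, 0) + S.Φ (0, x₁, 0) (0, x₂, 0) := by
  have h₁ : ((w₁ : W), x₁, w₁') = (w₁, 0, 0) + (0, x₁, 0) + (0, 0, w₁') := by simp
  have h₂ : ((w₂ : W), x₂, w₂') = (w₂, 0, 0) + (0, x₂, 0) + (0, 0, w₂') := by simp
  rw [h₁, h₂]
  simp only [map_add, LinearMap.add_apply, S.isoW, S.isoW', S.orthX, gs_orthX' S]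
  ring

lemma gs_ndX (S : GSSetup F W X W') {y : X}
    (h : ∀ x : X, S.Φ (0, x, 0) (0, y, 0) = 0) : y = 0 := by
  have h0 : ((0 : W), y, (0 : W')) = 0 := by
    apply S.nondeg
    rintro ⟨w, x, w'⟩
    rw [gs_expand]
    have := gs_flip S (h x)
    simp_all [Prod.mk_zero_zero]
  simpa [Prod.ext_iff] using h0

lemma gs_ndW (S : GSSetup F W X W') {z : W}
    (h : ∀ w' : W', S.Φ (z, 0, 0) (0, 0, w') = 0) : z = 0 := by
  have h0 : ((z : W), (0 : X), (0 : W')) = 0 := by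
    apply S.nondeg
    rintro ⟨w, x, w'⟩
    rw [gs_expand]
    simp_all [Prod.mk_zero_zero]
  simpa [Prod.ext_iff] using h0

lemma gs_hC (S : GSSetup F W X W') (ξ : X →ₗ[F] W) (ξs : W' →ₗ[F] X)
    (hξs : ∀ (w' : W') (x : X), S.Φ (0, ξs w', 0) (0, x, 0) = S.Φ (0, 0, w') (ξ x, 0, 0))
    (x : X) (w' : W') :
    S.Φ (0, x, 0) (0, ξs w', 0) = S.Φ (ξ x, 0, 0) (0, 0, w') := by
  rcases S.symm_or_alt with hs | hs
  · rw [hs ((0 : W), x, (0 : W')) _, hξs, hs ((0 : W), (0 : X), w') _]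
  · rw [hs ((0 : W), x, (0 : W')) _, hξs, hs ((0 : W), (0 : X), w') _, neg_neg]

/-- An endomorphism `n` of `V = W ⊕ X ⊕ W'` determined by linear maps
`ξ : X → W`, `ξ' : W' → X`, `η : W' → W` (via `n|_W = id`, `n|_X = id + ξ`,
`n|_{W'} = id + ξ' + η`) is an isometry of `(V, Φ)` if and only if `ξ' = −ξ*` and
`η + η* + ξ ξ* = 0`, where `ξ*` and `η*` are the `Φ`-adjoints. -/
theorem statement_3 [FiniteDimensional F W] [FiniteDimensional F X] [FiniteDimensional F W']
    (S : GSSetup F W X W')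
    (ξ : X →ₗ[F] W) (ξ' : W' →ₗ[F] X) (η : W' →ₗ[F] W)
    (ξs : W' →ₗ[F] X) (ηs : W' →ₗ[F] W)
    (hξs : ∀ (w' : W') (x : X), S.Φ (0, ξs w', 0) (0, x, 0) = S.Φ (0, 0, w') (ξ x, 0, 0))
    (hηs : ∀ w₁' w₂' : W', S.Φ (ηs w₁', 0, 0) (0, 0, w₂') = S.Φ (0, 0, w₁') (η w₂', 0, 0))
    (n : (W × X × W') →ₗ[F] (W × X × W'))
    (hn : ∀ (w : W) (x : X) (w' : W'),
      n (w, x, w') = (w + ξ x + η w', x + ξ' w', w')) :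
    (∀ v₁ v₂ : W × X × W', S.Φ (n v₁) (n v₂) = S.Φ v₁ v₂) ↔
      (ξ' = -ξs ∧ η + ηs + ξ ∘ₗ ξs = 0) := by
  have en : ∀ a : X, ((0 : W), -a, (0 : W')) = -((0 : W), a, (0 : W')) := by
    intro a; simp
  have key : ∀ (w₁ : W) (x₁ : X) (w₁' : W') (w₂ : W) (x₂ : X) (w₂' : W'),
      S.Φ (n (w₁, x₁, w₁')) (n (w₂, x₂, w₂')) =
        S.Φ ((w₁ : W), x₁, w₁') (w₂, x₂, w₂') +
          (S.Φ (ξ x₁, 0, 0) (0, 0, w₂') + S.Φ (η w₁', 0, 0) (0, 0, w₂') +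
            S.Φ (0, 0, w₁') (ξ x₂, 0, 0) + S.Φ (0, 0, w₁') (η w₂', 0, 0) +
            S.Φ (0, x₁, 0) (0, ξ' w₂', 0) + S.Φ (0, ξ' w₁', 0) (0, x₂, 0) +
            S.Φ (0, ξ' w₁', 0) (0, ξ' w₂', 0)) := by
    intro w₁ x₁ w₁' w₂ x₂ w₂'
    rw [hn, hn, gs_expand]
    have e₁ : ((w₁ + ξ x₁ + η w₁' : W), (0 : X), (0 : W')) =
        (w₁, 0, 0) + (ξ x₁, 0, 0) + (η w₁', 0, 0) := by simp
    have e₂ : ((w₂ + ξ x₂ + η w₂' : W), (0 : X), (0 : W')) =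
        (w₂, 0, 0) + (ξ x₂, 0, 0) + (η w₂', 0, 0) := by simp
    have e₃ : ((0 : W), x₁ + ξ' w₁', (0 : W')) = (0, x₁, 0) + (0, ξ' w₁', 0) := by simp
    have e₄ : ((0 : W), x₂ + ξ' w₂', (0 : W')) = (0, x₂, 0) + (0, ξ' w₂', 0) := by simp
    rw [e₁, e₂, e₃, e₄]
    simp only [map_add, LinearMap.add_apply, Prod.mk_zero_zero, map_zero,
      LinearMap.zero_apply]
    rw [gs_expand S w₁ x₁ w₁' w₂ x₂ w₂']
    simp only [Prod.mk_zero_zero]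
    ring
  constructor
  · intro hiso
    have hA : ξ' = -ξs := by
      ext w'
      have h0 : ∀ x : X, S.Φ (0, x, 0) (0, ξ' w' + ξs w', 0) = 0 := by
        intro x
        have h1 := hiso (0, x, 0) (0, 0, w')
        rw [key] at h1
        have e : ((0 : W), ξ' w' + ξs w', (0 : W')) = (0, ξ' w', 0) + (0, ξs w', 0) := by
          simp
        rw [e, map_add, gs_hC S ξ ξs hξs x w']
        simp only [map_zero, Prod.mk_zero_zero, LinearMap.zero_apply, add_zero,
          zero_add] at h1 ⊢
        linear_combination h1
      have h2 := gs_ndX S h0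
      simp only [LinearMap.neg_apply]
      exact eq_neg_of_add_eq_zero_left h2
    refine ⟨hA, ?_⟩
    ext w₁'
    have h0 : ∀ w₂' : W',
        S.Φ ((η w₁' + ηs w₁' + ξ (ξs w₁') : W), 0, 0) (0, 0, w₂') = 0 := by
      intro w₂'
      have h1 := hiso (0, 0, w₁') (0, 0, w₂')
      rw [key, hA] at h1
      simp only [LinearMap.neg_apply, en, map_neg, neg_neg] at h1
      rw [gs_hC S ξ ξs hξs (ξs w₁') w₂', ← hηs w₁' w₂'] at h1
      have e : ((η w₁' + ηs w₁' + ξ (ξs w₁') : W), (0 : X), (0 : W')) =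
          (η w₁', 0, 0) + (ηs w₁', 0, 0) + (ξ (ξs w₁'), 0, 0) := by simp
      rw [e]
      simp only [map_add, LinearMap.add_apply]
      simp only [map_zero, Prod.mk_zero_zero, LinearMap.zero_apply, add_zero, zero_add,
        neg_zero, S.isoW'] at h1 ⊢
      linear_combination h1
    have h2 := gs_ndW S h0
    simpa using h2
  · rintro ⟨hA, hB⟩ v₁ v₂
    obtain ⟨w₁, x₁, w₁'⟩ := v₁
    obtain ⟨w₂, x₂, w₂'⟩ := v₂
    rw [key]
    have hB' : η w₁' + ηs w₁' + ξ (ξs w₁') = 0 := by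
      have := LinearMap.congr_fun hB w₁'
      simpa using this
    rw [hA]
    simp only [LinearMap.neg_apply, en, map_neg, neg_neg]
    rw [gs_hC S ξ ξs hξs x₁ w₂', hξs w₁' x₂, gs_hC S ξ ξs hξs (ξs w₁') w₂',
      ← hηs w₁' w₂']
    have hz : S.Φ ((η w₁' + ηs w₁' + ξ (ξs w₁') : W), (0 : X), (0 : W')) (0, 0, w₂') = 0 := by
      rw [hB']
      simp [Prod.mk_zero_zero]
    have e : ((η w₁' + ηs w₁' + ξ (ξs w₁') : W), (0 : X), (0 : W')) =
        (η w₁', 0, 0) + (ηs w₁', 0, 0) + (ξ (ξs w₁'), 0, 0) := by simp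
    rw [e] at hz
    simp only [map_add, LinearMap.add_apply] at hz
    linear_combination hz
end

section
/- Let n = n(ξ, η) be an element of the unipotent radical N with η: W′ → W invertible, and define Norm(n) = 1 + ξ* η^{−1} ξ as an endomorphism of X. Then Norm(n) is an isometry of (X, Φ|_X), and rank(Norm(n) − 1; X) ≤ dim W, with equality if and only if ξ: X → W is surjective. -/
open LinearMap Function Module

variable {F W X W' : Type} [Field F]
  [AddCommGroup W] [Module F W] [AddCommGroup X] [Module F X]
  [AddCommGroup W'] [Module F W']

/-- `Norm(n(ξ, η)) = 1 + ξ* ∘ η⁻¹ ∘ ξ`, the Goldberg–Shahidi norm of `n(ξ, η) ∈ N'`;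
here the invertible `η` is realised by the equivalence `ηe : W' ≃ W` and `ξs = ξ*`. -/
def NormMap (ξ : X →ₗ[F] W) (ξs : W' →ₗ[F] X) (ηe : W' ≃ₗ[F] W) : X →ₗ[F] X :=
  LinearMap.id + ξs ∘ₗ ηe.symm.toLinearMap ∘ₗ ξ

/-- Let `n = n(ξ, η) ∈ N'` (i.e. `η : W' → W` is invertible, realised by the
equivalence `ηe`), and set `Norm(n) = 1 + ξ* ∘ η⁻¹ ∘ ξ : X → X`.  Then `Norm(n)` is an
isometry of `(X, Φ|_X)` and `rank(Norm(n) − 1) ≤ dim W`, with equality if and only if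
`ξ : X → W` is surjective. -/
theorem statement_5 [FiniteDimensional F W] [FiniteDimensional F X] [FiniteDimensional F W']
    (S : GSSetup F W X W')
    (ξ : X →ₗ[F] W) (ξs : W' →ₗ[F] X) (ηe : W' ≃ₗ[F] W) (ηs : W' →ₗ[F] W)
    (hξs : ∀ (w' : W') (x : X), S.Φ (0, ξs w', 0) (0, x, 0) = S.Φ (0, 0, w') (ξ x, 0, 0))
    (hηs : ∀ w₁' w₂' : W', S.Φ (ηs w₁', 0, 0) (0, 0, w₂') = S.Φ (0, 0, w₁') (ηe w₂', 0, 0))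
    (hrel : ηe.toLinearMap + ηs + ξ ∘ₗ ξs = 0) :
    (∀ x y : X,
        S.Φ (0, NormMap ξ ξs ηe x, 0) (0, NormMap ξ ξs ηe y, 0) = S.Φ (0, x, 0) (0, y, 0))
    ∧ Function.Bijective (NormMap ξ ξs ηe)
    ∧ Module.finrank F (LinearMap.range (NormMap ξ ξs ηe - LinearMap.id))
        ≤ Module.finrank F W
    ∧ (Module.finrank F (LinearMap.range (NormMap ξ ξs ηe - LinearMap.id))
        = Module.finrank F W ↔ Function.Surjective ξ) := by
  have addX : ∀ x y : X, ((0:W), x+y, (0:W')) = ((0:W),x,(0:W')) + ((0:W),y,(0:W')) := by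
    intro x y; simp [Prod.ext_iff]
  have decomp : ∀ (w : W) (x : X) (w' : W'),
      ((w, x, w') : W × X × W') = (w,0,0) + ((0:W),x,(0:W')) + (0,0,w') := by
    intro w x w'; simp [Prod.ext_iff]
  -- nondegeneracy of Φ restricted to X
  have nondegX : ∀ x : X, (∀ y : X, S.Φ (0, x, 0) (0, y, 0) = 0) → x = 0 := by
    intro x hx
    have h0 : ((0:W), x, (0:W')) = 0 := by
      apply S.nondeg
      rintro ⟨w, y, w'⟩
      rw [decomp w y w', map_add, map_add, hx y]
      have h1 : S.Φ (0, x, 0) (w, 0, w') = 0 := S.orthX x w w'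
      have h2 : ((w, (0:X), w') : W × X × W') = (w,0,0) + (0,0,w') := by
        simp [Prod.ext_iff]
      rw [h2, map_add] at h1
      linear_combination h1
    exact congrArg (fun v : W × X × W' => v.2.1) h0
  -- the key "double flip" computation
  have flipflip : ∀ (x : X) (w₁' w₂' : W'), ξ x = ηe w₁' →
      S.Φ (0, x, 0) (0, ξs w₂', 0) = S.Φ (0, 0, w₁') (ηs w₂', 0, 0) := by
    intro x w₁' w₂' hx
    have h1 : S.Φ (0, ξs w₂', 0) (0, x, 0) = S.Φ (ηs w₂', 0, 0) (0, 0, w₁') := by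
      rw [hξs w₂' x, hx, hηs w₂' w₁']
    rcases S.symm_or_alt with h | h
    · rw [h ((0:W), x, (0:W')) (0, ξs w₂', 0), h1, h]
    · rw [h ((0:W), x, (0:W')) (0, ξs w₂', 0), h1, h, neg_neg]
  -- pointwise relation from hrel
  have hrel' : ∀ w' : W', ξ (ξs w') = -(ηe w') + -(ηs w') := by
    intro w'
    have h := DFunLike.congr_fun hrel w'
    simp only [LinearMap.add_apply, LinearMap.comp_apply, LinearMap.zero_apply,
      LinearEquiv.coe_coe] at h
    rw [← neg_add]
    exact eq_neg_of_add_eq_zero_right h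
  -- the isometry property
  have isom : ∀ x y : X,
      S.Φ (0, NormMap ξ ξs ηe x, 0) (0, NormMap ξ ξs ηe y, 0) = S.Φ (0, x, 0) (0, y, 0) := by
    intro x y
    set w₁' := ηe.symm (ξ x) with hw1
    set w₂' := ηe.symm (ξ y) with hw2
    have hx : ξ x = ηe w₁' := by rw [hw1, ηe.apply_symm_apply]
    have hy : ξ y = ηe w₂' := by rw [hw2, ηe.apply_symm_apply]
    have hN : ∀ z : X, NormMap ξ ξs ηe z = z + ξs (ηe.symm (ξ z)) := by
      intro z; rfl
    have expand : ∀ a b c d : X, S.Φ (((0:W),a,(0:W')) + (0,b,0)) (((0:W),c,(0:W')) + (0,d,0))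
        = S.Φ (0,a,0) (0,c,0) + S.Φ (0,a,0) (0,d,0)
          + S.Φ (0,b,0) (0,c,0) + S.Φ (0,b,0) (0,d,0) := by
      intro a b c d
      simp only [map_add, LinearMap.add_apply]
      ring
    rw [hN x, hN y, ← hw1, ← hw2, addX, addX, expand]
    have T1 : S.Φ (0, ξs w₁', 0) (0, y, 0) = S.Φ (0, 0, w₁') (ηe w₂', 0, 0) := by
      rw [hξs w₁' y, hy]
    have T2 : S.Φ (0, ξs w₁', 0) (0, ξs w₂', 0)
        = - S.Φ (0, 0, w₁') (ηe w₂', 0, 0) - S.Φ (0, 0, w₁') (ηs w₂', 0, 0) := by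
      rw [hξs w₁' (ξs w₂'), hrel' w₂']
      have h2 : ((-(ηe w₂') + -(ηs w₂'), (0:X), (0:W')) : W × X × W')
          = (-(ηe w₂'), (0:X), (0:W')) + (-(ηs w₂'), 0, 0) := by
        simp [Prod.ext_iff]
      have h3 : ∀ w : W, ((-w, (0:X), (0:W')) : W × X × W') = -(w, 0, 0) := by
        intro w; simp [Prod.ext_iff]
      rw [h2, map_add, h3, h3, map_neg, map_neg]
      ring
    have T3 : S.Φ (0, x, 0) (0, ξs w₂', 0) = S.Φ (0, 0, w₁') (ηs w₂', 0, 0) :=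
      flipflip x w₁' w₂' hx
    rw [T1, T2, T3]; ring
  refine ⟨isom, ?_, ?_, ?_⟩
  -- bijectivity
  · have hinj : Function.Injective (NormMap ξ ξs ηe) := by
      rw [← LinearMap.ker_eq_bot, LinearMap.ker_eq_bot']
      intro x hx
      apply nondegX
      intro y
      have h := isom x y
      rw [hx] at h
      rw [← h]
      have h0 : ((0:W), (0:X), (0:W')) = (0 : W × X × W') := rfl
      rw [h0, map_zero]; rfl
    exact ⟨hinj, LinearMap.injective_iff_surjective.mp hinj⟩
  -- rank inequality
  · have hdiff : NormMap ξ ξs ηe - LinearMap.id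
        = (ξs ∘ₗ ηe.symm.toLinearMap) ∘ₗ ξ := by
      ext x; simp [NormMap]
    rw [hdiff, LinearMap.range_comp]
    calc finrank F (Submodule.map (ξs ∘ₗ ηe.symm.toLinearMap) (LinearMap.range ξ))
        ≤ finrank F (LinearMap.range ξ) := Submodule.finrank_map_le _ _
      _ ≤ finrank F W := (LinearMap.range ξ).finrank_le
  -- equality iff ξ surjective
  · have hdiff : NormMap ξ ξs ηe - LinearMap.id
        = (ξs ∘ₗ ηe.symm.toLinearMap) ∘ₗ ξ := by
      ext x; simp [NormMap]
    rw [hdiff, LinearMap.range_comp]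
    constructor
    · intro heq
      have hle : finrank F (Submodule.map (ξs ∘ₗ ηe.symm.toLinearMap) (LinearMap.range ξ))
          ≤ finrank F (LinearMap.range ξ) := Submodule.finrank_map_le _ _
      have hr : finrank F (LinearMap.range ξ) = finrank F W :=
        le_antisymm (LinearMap.range ξ).finrank_le (heq ▸ hle)
      rw [← LinearMap.range_eq_top]
      exact Submodule.eq_top_of_finrank_eq hr
    · intro hsurj
      -- ξs is injective
      have hξsinj : Function.Injective ξs := by
        rw [← LinearMap.ker_eq_bot, LinearMap.ker_eq_bot']
        intro w' hw'
        have h0 : ((0:W), (0:X), w') = 0 := by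
          apply S.nondeg
          rintro ⟨w, y, w''⟩
          rw [decomp w y w'', map_add, map_add]
          obtain ⟨x, hx⟩ := hsurj w
          have e1 : S.Φ (0, 0, w') (w, 0, 0) = 0 := by
            rw [← hx, ← hξs w' x, hw']
            have h0' : ((0:W), (0:X), (0:W')) = (0 : W × X × W') := rfl
            rw [h0', map_zero]; rfl
          have e2 : S.Φ (0, 0, w') ((0:W), y, (0:W')) = 0 := by
            have horth : S.Φ ((0:W), y, (0:W')) ((0:W), (0:X), w') = 0 := by
              have := S.orthX y 0 w'; simpa using this
            rcases S.symm_or_alt with h | h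
            · rw [h ((0:W), (0:X), w') ((0:W), y, (0:W')), horth]
            · rw [h ((0:W), (0:X), w') ((0:W), y, (0:W')), horth, neg_zero]
          rw [e1, e2, S.isoW' w' w'']; ring
        exact congrArg (fun v : W × X × W' => v.2.2) h0
      have hrangetop : LinearMap.range ξ = ⊤ := LinearMap.range_eq_top.mpr hsurj
      rw [hrangetop, Submodule.map_top]
      have hinj2 : Function.Injective (ξs ∘ₗ ηe.symm.toLinearMap) :=
        hξsinj.comp ηe.symm.injective
      rw [LinearMap.finrank_range_of_inj hinj2]
end

section
/- Let n = n(ξ, η) ∈ N′ (i.e. η invertible) and let m(g, h) be the element of the Levi subgroup M acting as g ∈ GL(W) on W, as the isometry h on X, and correspondingly on W′. Then Norm(m(g,h) n m(g,h)^{−1}) = h ∘ Norm(n) ∘ h^{−1}. Moreover, for any g ∈ GL(W), the pair (gξ, gηg*) satisfies the defining relation and Norm(n(ξ, η)) = Norm(n(gξ, gηg*)). -/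
/-!
Writing `k` for the action of `m(g, h)` on `W'`, conjugation gives
`m n(ξ, η) m⁻¹ = n(g ξ h⁻¹, g η k⁻¹)` with `X`-component `h ξ* k⁻¹`, so in
`Norm = 1 + ξ* η⁻¹ ξ` the factors `k` and `g` cancel and only the conjugation by `h` is left.
Adjoints are unique because `Φ` is nondegenerate, `X` is orthogonal to `W ⊕ W'` and `W` is
isotropic; hence `(g ξ)* = ξ* g*` and `(g η g*)* = g η* g*`. The relation for `(g ξ, g η g*)`
is then `g (η + η* + ξ ξ*) g* = 0`, and in its norm `g` and `g*` cancel.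
-/

open LinearMap Function Module

variable {F W X W' : Type} [Field F]
  [AddCommGroup W] [Module F W] [AddCommGroup X] [Module F X]
  [AddCommGroup W'] [Module F W']

namespace GSSetup

variable (S : GSSetup F W X W')

-- The adjoints `ξ*`, `η*`, `g*` of the paper, all taken through the pairing of `W` with `W'`.
def IsAdjointX (ξ : X →ₗ[F] W) (ξs : W' →ₗ[F] X) : Prop :=
  ∀ (w' : W') (x : X), S.Φ (0, ξs w', 0) (0, x, 0) = S.Φ (0, 0, w') (ξ x, 0, 0)

def IsAdjointW (η ηs : W' →ₗ[F] W) : Prop :=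
  ∀ w₁' w₂' : W', S.Φ (ηs w₁', 0, 0) (0, 0, w₂') = S.Φ (0, 0, w₁') (η w₂', 0, 0)

def IsAdjointGL (g : W →ₗ[F] W) (gs : W' →ₗ[F] W') : Prop :=
  ∀ (w' : W') (w : W), S.Φ (0, 0, gs w') (w, 0, 0) = S.Φ (0, 0, w') (g w, 0, 0)

variable {S}

theorem Φ_swap_of_eq {a b c d : W × X × W'} (H : S.Φ a b = S.Φ c d) : S.Φ b a = S.Φ d c := by
  rcases S.symm_or_alt with hsymm | halt
  · rwa [hsymm, hsymm d]
  · rw [halt, halt d, H]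

theorem X_ext {x₁ x₂ : X} (H : ∀ y : X, S.Φ (0, x₁, 0) (0, y, 0) = S.Φ (0, x₂, 0) (0, y, 0)) :
    x₁ = x₂ := by
  have hzero : ((0 : W), x₁ - x₂, (0 : W')) = 0 := by
    refine S.nondeg _ fun ⟨w, y, w'⟩ => ?_
    have hsplit : ((w, y, w') : W × X × W') = (w, 0, w') + (0, y, 0) := by simp
    have hdiff : ((0 : W), x₁ - x₂, (0 : W')) = (0, x₁, 0) - (0, x₂, 0) := by simp
    rw [hsplit, map_add, S.orthX, hdiff, map_sub, LinearMap.sub_apply, H, sub_self, zero_add]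
  simpa [sub_eq_zero] using congrArg (·.2.1) hzero

theorem W_ext {w₁ w₂ : W}
    (H : ∀ w' : W', S.Φ (w₁, 0, 0) (0, 0, w') = S.Φ (w₂, 0, 0) (0, 0, w')) : w₁ = w₂ := by
  have hzero : (w₁ - w₂, (0 : X), (0 : W')) = 0 := by
    refine S.nondeg _ fun ⟨w, y, w'⟩ => ?_
    have hsplit : ((w, y, w') : W × X × W') = (w, 0, 0) + (0, y, 0) + (0, 0, w') := by simp
    have horth : S.Φ (w₁ - w₂, 0, 0) (0, y, 0) = 0 := by
      simpa using Φ_swap_of_eq ((S.orthX y (w₁ - w₂) 0).trans (S.Φ.map_zero₂ 0).symm)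
    have hdiff : (w₁ - w₂, (0 : X), (0 : W')) = (w₁, 0, 0) - (w₂, 0, 0) := by simp
    rw [hsplit, map_add, map_add, S.isoW, horth, hdiff, map_sub, LinearMap.sub_apply, H, sub_self]
    simp
  simpa [sub_eq_zero] using congrArg (·.1) hzero

theorem IsAdjointX.unique {ξ : X →ₗ[F] W} {ξs ξs' : W' →ₗ[F] X}
    (h : S.IsAdjointX ξ ξs) (h' : S.IsAdjointX ξ ξs') : ξs = ξs' :=
  LinearMap.ext fun w' => X_ext fun x => (h w' x).trans (h' w' x).symm

theorem IsAdjointW.unique {η ηs ηs' : W' →ₗ[F] W}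
    (h : S.IsAdjointW η ηs) (h' : S.IsAdjointW η ηs') : ηs = ηs' :=
  LinearMap.ext fun w₁' => W_ext fun w₂' => (h w₁' w₂').trans (h' w₁' w₂').symm

theorem IsAdjointX.comp {ξ : X →ₗ[F] W} {ξs : W' →ₗ[F] X} {g : W →ₗ[F] W} {gs : W' →ₗ[F] W'}
    (hξ : S.IsAdjointX ξ ξs) (hg : S.IsAdjointGL g gs) :
    S.IsAdjointX (g ∘ₗ ξ) (ξs ∘ₗ gs) := fun w' x =>
  (hξ (gs w') x).trans (hg w' (ξ x))

theorem IsAdjointW.conj {η ηs : W' →ₗ[F] W} {g : W →ₗ[F] W} {gs : W' →ₗ[F] W'}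
    (hη : S.IsAdjointW η ηs) (hg : S.IsAdjointGL g gs) :
    S.IsAdjointW (g ∘ₗ η ∘ₗ gs) (g ∘ₗ ηs ∘ₗ gs) := fun w₁' w₂' =>
  calc S.Φ (g (ηs (gs w₁')), 0, 0) (0, 0, w₂')
      = S.Φ (ηs (gs w₁'), 0, 0) (0, 0, gs w₂') := Φ_swap_of_eq (hg w₂' _).symm
    _ = S.Φ (0, 0, gs w₁') (η (gs w₂'), 0, 0) := hη _ _
    _ = S.Φ (0, 0, w₁') (g (η (gs w₂')), 0, 0) := hg _ _

end GSSetup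

theorem NormMap_conj (ξ : X →ₗ[F] W) (ξs : W' →ₗ[F] X) (ηe : W' ≃ₗ[F] W)
    (g : W ≃ₗ[F] W) (h : X ≃ₗ[F] X) (k : W' ≃ₗ[F] W') :
    NormMap (g.toLinearMap ∘ₗ ξ ∘ₗ h.symm.toLinearMap) (h.toLinearMap ∘ₗ ξs ∘ₗ k.toLinearMap)
        (k.trans (ηe.trans g))
      = h.toLinearMap ∘ₗ NormMap ξ ξs ηe ∘ₗ h.symm.toLinearMap := by
  ext x
  simp [NormMap]

theorem unipotent_coeffs_eq {a a' : X →ₗ[F] W} {b b' : W' →ₗ[F] W} {c c' : W' →ₗ[F] X}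
    (H : ∀ (w : W) (x : X) (w' : W'),
      ((w + a x + b w', x - c w', w') : W × X × W') = (w + a' x + b' w', x - c' w', w')) :
    a = a' ∧ b = b' ∧ c = c' :=
  ⟨LinearMap.ext fun x => by simpa using congrArg (·.1) (H 0 x 0),
    LinearMap.ext fun w' => by simpa using congrArg (·.1) (H 0 0 w'),
    LinearMap.ext fun w' => by simpa using congrArg (·.2.1) (H 0 0 w')⟩

theorem levi_conj_unipotent_apply {ξ : X →ₗ[F] W} {ξs : W' →ₗ[F] X} {ηe : W' ≃ₗ[F] W}
    {n : (W × X × W') →ₗ[F] (W × X × W')}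
    (hn : ∀ (w : W) (x : X) (w' : W'), n (w, x, w') = (w + ξ x + ηe w', x - ξs w', w'))
    {g : W ≃ₗ[F] W} {h : X ≃ₗ[F] X} {k : W' ≃ₗ[F] W'} {m : (W × X × W') ≃ₗ[F] (W × X × W')}
    (hm : ∀ (w : W) (x : X) (w' : W'), m (w, x, w') = (g w, h x, k w'))
    (w : W) (x : X) (w' : W') :
    (m.toLinearMap ∘ₗ n ∘ₗ m.symm.toLinearMap) (w, x, w')
      = (w + (g.toLinearMap ∘ₗ ξ ∘ₗ h.symm.toLinearMap) x + (k.symm.trans (ηe.trans g)) w',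
          x - (h.toLinearMap ∘ₗ ξs ∘ₗ k.symm.toLinearMap) w', w') := by
  have hm_symm : m.symm (w, x, w') = (g.symm w, h.symm x, k.symm w') :=
    m.symm_apply_eq.mpr (by simp [hm])
  simp [hm_symm, hn, hm]

theorem statement_6_general
    (S : GSSetup F W X W')
    (ξ : X →ₗ[F] W) (ξs : W' →ₗ[F] X) (ηe : W' ≃ₗ[F] W) (ηs : W' →ₗ[F] W)
    (hξs : ∀ (w' : W') (x : X), S.Φ (0, ξs w', 0) (0, x, 0) = S.Φ (0, 0, w') (ξ x, 0, 0))
    (hηs : ∀ w₁' w₂' : W', S.Φ (ηs w₁', 0, 0) (0, 0, w₂') = S.Φ (0, 0, w₁') (ηe w₂', 0, 0))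
    (hrel : ηe.toLinearMap + ηs + ξ ∘ₗ ξs = 0)
    (n : (W × X × W') →ₗ[F] (W × X × W'))
    (hn : ∀ (w : W) (x : X) (w' : W'),
      n (w, x, w') = (w + ξ x + ηe w', x - ξs w', w'))
    -- the Levi element `m = m(g, h)`:
    (g : W ≃ₗ[F] W) (h : X ≃ₗ[F] X) (gW' : W' ≃ₗ[F] W')
    (m : (W × X × W') ≃ₗ[F] (W × X × W'))
    (hm : ∀ (w : W) (x : X) (w' : W'), m (w, x, w') = (g w, h x, gW' w'))
    -- data of `m n m⁻¹ = n(ξ₂, η₂) ∈ N'`: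
    (ξ₂ : X →ₗ[F] W) (ξ₂s : W' →ₗ[F] X) (η₂e : W' ≃ₗ[F] W)
    (hconj : ∀ (w : W) (x : X) (w' : W'),
      (m.toLinearMap ∘ₗ n ∘ₗ m.symm.toLinearMap) (w, x, w')
        = (w + ξ₂ x + η₂e w', x - ξ₂s w', w'))
    -- the adjoint `g*` of `g` and the data of the pair `(g ξ, g η g*)`:
    (gs : W' ≃ₗ[F] W')
    (hgs : ∀ (w' : W') (w : W), S.Φ (0, 0, gs w') (w, 0, 0) = S.Φ (0, 0, w') (g w, 0, 0))
    (ξ₃s : W' →ₗ[F] X)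
    (hξ₃s : ∀ (w' : W') (x : X),
      S.Φ (0, ξ₃s w', 0) (0, x, 0) = S.Φ (0, 0, w') ((g.toLinearMap ∘ₗ ξ) x, 0, 0))
    (η₃s : W' →ₗ[F] W)
    (hη₃s : ∀ w₁' w₂' : W',
      S.Φ (η₃s w₁', 0, 0) (0, 0, w₂')
        = S.Φ (0, 0, w₁') ((gs.trans (ηe.trans g)) w₂', 0, 0)) :
    -- (i) `Norm(m n m⁻¹) = h ∘ Norm(n) ∘ h⁻¹`
    (NormMap ξ₂ ξ₂s η₂e = h.toLinearMap ∘ₗ NormMap ξ ξs ηe ∘ₗ h.symm.toLinearMap)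
    -- (ii) `(g ξ, g η g*)` satisfies the defining relation
    ∧ ((gs.trans (ηe.trans g)).toLinearMap + η₃s + (g.toLinearMap ∘ₗ ξ) ∘ₗ ξ₃s = 0)
    -- (iii) `Norm(n(g ξ, g η g*)) = Norm(n(ξ, η))`
    ∧ (NormMap (g.toLinearMap ∘ₗ ξ) ξ₃s (gs.trans (ηe.trans g)) = NormMap ξ ξs ηe) := by
  obtain ⟨rfl, hη₂, rfl⟩ := unipotent_coeffs_eq fun w x w' =>
    (levi_conj_unipotent_apply hn hm w x w').symm.trans (hconj w x w')
  obtain rfl : η₂e = gW'.symm.trans (ηe.trans g) := LinearEquiv.toLinearMap_injective hη₂.symm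
  obtain rfl : ξ₃s = ξs ∘ₗ gs.toLinearMap :=
    GSSetup.IsAdjointX.unique hξ₃s (GSSetup.IsAdjointX.comp hξs hgs)
  obtain rfl : η₃s = g.toLinearMap ∘ₗ ηs ∘ₗ gs.toLinearMap :=
    GSSetup.IsAdjointW.unique hη₃s (GSSetup.IsAdjointW.conj hηs hgs)
  refine ⟨NormMap_conj ξ ξs ηe g h gW'.symm, ?_, ?_⟩
  · calc _ = g.toLinearMap ∘ₗ (ηe.toLinearMap + ηs + ξ ∘ₗ ξs) ∘ₗ gs.toLinearMap := by
          ext; simp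
      _ = 0 := by simp [hrel]
  · simpa using NormMap_conj ξ ξs ηe g (LinearEquiv.refl F X) gs

/-- Let `n = n(ξ, η) ∈ N'` and let `m = m(g, h)` be the element of the Levi
subgroup `M` acting as `g ∈ GL(W)` on `W`, as the isometry `h` on `X`, and correspondingly
(as `(g*)⁻¹`) on `W'`.  Then `Norm(m n m⁻¹) = h ∘ Norm(n) ∘ h⁻¹`.  Moreover, for any
`g ∈ GL(W)` the pair `(g ξ, g η g*)` again satisfies the defining relation, and
`Norm(n(ξ, η)) = Norm(n(g ξ, g η g*))`. -/
theorem statement_6 [FiniteDimensional F W] [FiniteDimensional F X] [FiniteDimensional F W']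
    (S : GSSetup F W X W')
    (ξ : X →ₗ[F] W) (ξs : W' →ₗ[F] X) (ηe : W' ≃ₗ[F] W) (ηs : W' →ₗ[F] W)
    (hξs : ∀ (w' : W') (x : X), S.Φ (0, ξs w', 0) (0, x, 0) = S.Φ (0, 0, w') (ξ x, 0, 0))
    (hηs : ∀ w₁' w₂' : W', S.Φ (ηs w₁', 0, 0) (0, 0, w₂') = S.Φ (0, 0, w₁') (ηe w₂', 0, 0))
    (hrel : ηe.toLinearMap + ηs + ξ ∘ₗ ξs = 0)
    (n : (W × X × W') →ₗ[F] (W × X × W'))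
    (hn : ∀ (w : W) (x : X) (w' : W'),
      n (w, x, w') = (w + ξ x + ηe w', x - ξs w', w'))
    -- the Levi element `m = m(g, h)`:
    (g : W ≃ₗ[F] W) (h : X ≃ₗ[F] X) (gW' : W' ≃ₗ[F] W')
    (m : (W × X × W') ≃ₗ[F] (W × X × W'))
    (hm : ∀ (w : W) (x : X) (w' : W'), m (w, x, w') = (g w, h x, gW' w'))
    (hmiso : ∀ v₁ v₂ : W × X × W', S.Φ (m v₁) (m v₂) = S.Φ v₁ v₂)
    -- data of `m n m⁻¹ = n(ξ₂, η₂) ∈ N'`: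
    (ξ₂ : X →ₗ[F] W) (ξ₂s : W' →ₗ[F] X) (η₂e : W' ≃ₗ[F] W)
    (hξ₂s : ∀ (w' : W') (x : X), S.Φ (0, ξ₂s w', 0) (0, x, 0) = S.Φ (0, 0, w') (ξ₂ x, 0, 0))
    (hconj : ∀ (w : W) (x : X) (w' : W'),
      (m.toLinearMap ∘ₗ n ∘ₗ m.symm.toLinearMap) (w, x, w')
        = (w + ξ₂ x + η₂e w', x - ξ₂s w', w'))
    -- the adjoint `g*` of `g` and the data of the pair `(g ξ, g η g*)`:
    (gs : W' ≃ₗ[F] W')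
    (hgs : ∀ (w' : W') (w : W), S.Φ (0, 0, gs w') (w, 0, 0) = S.Φ (0, 0, w') (g w, 0, 0))
    (ξ₃s : W' →ₗ[F] X)
    (hξ₃s : ∀ (w' : W') (x : X),
      S.Φ (0, ξ₃s w', 0) (0, x, 0) = S.Φ (0, 0, w') ((g.toLinearMap ∘ₗ ξ) x, 0, 0))
    (η₃s : W' →ₗ[F] W)
    (hη₃s : ∀ w₁' w₂' : W',
      S.Φ (η₃s w₁', 0, 0) (0, 0, w₂')
        = S.Φ (0, 0, w₁') ((gs.trans (ηe.trans g)) w₂', 0, 0)) :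
    -- (i) `Norm(m n m⁻¹) = h ∘ Norm(n) ∘ h⁻¹`
    (NormMap ξ₂ ξ₂s η₂e = h.toLinearMap ∘ₗ NormMap ξ ξs ηe ∘ₗ h.symm.toLinearMap)
    -- (ii) `(g ξ, g η g*)` satisfies the defining relation
    ∧ ((gs.trans (ηe.trans g)).toLinearMap + η₃s + (g.toLinearMap ∘ₗ ξ) ∘ₗ ξ₃s = 0)
    -- (iii) `Norm(n(g ξ, g η g*)) = Norm(n(ξ, η))`
    ∧ (NormMap (g.toLinearMap ∘ₗ ξ) ξ₃s (gs.trans (ηe.trans g)) = NormMap ξ ξs ηe) :=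
  statement_6_general S ξ ξs ηe ηs hξs hηs hrel n hn g h gW' m hm ξ₂ ξ₂s η₂e hconj gs hgs ξ₃s hξ₃s
    η₃s hη₃s
end

section
/- Define the bilinear (resp. sesquilinear) form Ψ_W on W by Ψ_W(w₁, w₂) = Φ(ξ⁺w₁, ξ⁺w₂). Then Ψ_W is nondegenerate, and the map Ξ(A) = ξAξ⁺ restricts to a group isomorphism from H_Y = {h ∈ Isom(X,Φ) : h|_{Y^⊥} = id} onto Isom(W, Ψ_W). -/
open LinearMap Function Module

variable {F W X W' : Type} [Field F]
  [AddCommGroup W] [Module F W] [AddCommGroup X] [Module F X]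
  [AddCommGroup W'] [Module F W']

/-- Define `Ψ_W` on `W` by `Ψ_W(w₁, w₂) = Φ(ξ⁺ w₁, ξ⁺ w₂)`.  Then `Ψ_W`
is nondegenerate, and `Ξ(A) = ξ A ξ⁺` restricts to a group isomorphism from
`H_Y = {h ∈ Isom(X, Φ) : h|_{Y^⊥} = id}` onto `Isom(W, Ψ_W)`. -/
theorem statement_10 [FiniteDimensional F W] [FiniteDimensional F X] [FiniteDimensional F W']
    (S : GSSetup F W X W') (Y : Submodule F X)
    (hYnd : ∀ y ∈ Y, (∀ z ∈ Y, S.Φ (0, y, 0) (0, z, 0) = 0) → y = 0)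
    (hdim : Module.finrank F Y = Module.finrank F W)
    (ξ : X →ₗ[F] W)
    (hker : ∀ x ∈ perpY S Y, ξ x = 0)
    (hinj : ∀ x ∈ Y, ξ x = 0 → x = 0)
    (hsurj : ∀ w : W, ∃ x ∈ Y, ξ x = w)
    (ξs : W' →ₗ[F] X)
    (hξs : ∀ (w' : W') (x : X), S.Φ (0, ξs w', 0) (0, x, 0) = S.Φ (0, 0, w') (ξ x, 0, 0))
    (ue : W ≃ₗ[F] W')
    (hue : ∀ w : W, ξ (ξs (ue w)) = w) (hue' : ∀ w' : W', ue (ξ (ξs w')) = w') :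
    -- `Ψ_W` is nondegenerate
    ((∀ w : W, (∀ w₂ : W, PsiW S ξs ue w w₂ = 0) → w = 0)
      ∧ (∀ w : W, (∀ w₁ : W, PsiW S ξs ue w₁ w = 0) → w = 0))
    -- `Ξ` maps `H_Y` into `Isom(W, Ψ_W)`
    ∧ (∀ h : X ≃ₗ[F] X, IsHY S Y h →
        (∀ w₁ w₂ : W,
          PsiW S ξs ue (Xi ξ ξs ue h.toLinearMap w₁) (Xi ξ ξs ue h.toLinearMap w₂)
            = PsiW S ξs ue w₁ w₂)
        ∧ Function.Bijective (Xi ξ ξs ue h.toLinearMap))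
    -- `Ξ` is a group homomorphism on `H_Y`
    ∧ (∀ h₁ h₂ : X ≃ₗ[F] X, IsHY S Y h₁ → IsHY S Y h₂ →
        Xi ξ ξs ue (h₁.toLinearMap ∘ₗ h₂.toLinearMap)
          = Xi ξ ξs ue h₁.toLinearMap ∘ₗ Xi ξ ξs ue h₂.toLinearMap)
    -- injectivity
    ∧ (∀ h₁ h₂ : X ≃ₗ[F] X, IsHY S Y h₁ → IsHY S Y h₂ →
        Xi ξ ξs ue h₁.toLinearMap = Xi ξ ξs ue h₂.toLinearMap → h₁ = h₂)
    -- surjectivity onto `Isom(W, Ψ_W)`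
    ∧ (∀ g : W ≃ₗ[F] W, (∀ w₁ w₂ : W, PsiW S ξs ue (g w₁) (g w₂) = PsiW S ξs ue w₁ w₂) →
        ∃ h : X ≃ₗ[F] X, IsHY S Y h ∧ Xi ξ ξs ue h.toLinearMap = g.toLinearMap) := by
  
  classical
  -- the embedding of `X` into `V` and the restricted form `B`
  set j : X →ₗ[F] (W × X × W') := LinearMap.prod 0 (LinearMap.prod LinearMap.id 0) with hjdef
  have hj : ∀ x : X, j x = (0, x, 0) := fun x => rfl
  set B : X →ₗ[F] X →ₗ[F] F := S.Φ.compl₁₂ j j with hBdef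
  have hB : ∀ x y : X, B x y = S.Φ (0, x, 0) (0, y, 0) := fun x y => rfl
  -- ξ⁺
  set u : W →ₗ[F] X := ξs ∘ₗ ue.toLinearMap with hudef
  have hu : ∀ w : W, u w = ξs (ue w) := fun w => rfl
  have huξ : ∀ w : W, ξ (u w) = w := fun w => hue w
  -- expansion of Φ against (0,x,0)
  have hexp : ∀ (x : X) (w : W) (y : X) (w' : W'), S.Φ (0, x, 0) (w, y, w') = B x y := by
    intro x w y w'
    have h : ((w : W), y, (w' : W')) = ((0 : W), y, (0 : W')) + (w, 0, w') := by simp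
    rw [h, map_add, hB, S.orthX, add_zero]
  -- flipping
  have hflip : ∀ x y : X, B x y = 0 → B y x = 0 := by
    intro x y hxy
    rcases S.symm_or_alt with hs | hs
    · rw [hB, hs, ← hB, hxy]
    · rw [hB, hs, ← hB, hxy, neg_zero]
  -- left nondegeneracy of B
  have hBleft : ∀ x : X, (∀ y : X, B x y = 0) → x = 0 := by
    intro x hx
    have h0 : ((0 : W), x, (0 : W')) = 0 := by
      apply S.nondeg
      rintro ⟨w, y, w'⟩
      rw [hexp, hx]
    have := congrArg (fun v : W × X × W' => v.2.1) h0
    simpa using this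
  have hBright : ∀ x : X, (∀ y : X, B y x = 0) → x = 0 := by
    intro x hx
    exact hBleft x fun y => hflip y x (hx y)
  -- B (u w) x vanishes on ker ξ
  have hBu : ∀ (w : W) (x : X), ξ x = 0 → B (u w) x = 0 := by
    intro w x hx
    rw [hB, hu, hξs, hx]
    have h : ((0 : W), (0 : X), (0 : W')) = (0 : W × X × W') := rfl
    rw [h, map_zero]
  have hBu' : ∀ (w : W) (x : X), ξ x = 0 → B x (u w) = 0 := by
    intro w x hx
    exact hflip _ _ (hBu w x hx)
  have hPsi : ∀ w₁ w₂ : W, PsiW S ξs ue w₁ w₂ = B (u w₁) (u w₂) := fun _ _ => rfl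
  have hdecomp : ∀ x : X, ξ (x - u (ξ x)) = 0 := by
    intro x; rw [map_sub, huξ, sub_self]
  have hBux : ∀ (w : W) (x : X), B (u w) x = PsiW S ξs ue w (ξ x) := by
    intro w x
    have h : (x : X) = u (ξ x) + (x - u (ξ x)) := by abel
    rw [hPsi]
    conv_lhs => rw [h]
    rw [map_add, hBu w _ (hdecomp x), add_zero]
  have hBxu : ∀ (w : W) (x : X), B x (u w) = PsiW S ξs ue (ξ x) w := by
    intro w x
    have h : (x : X) = u (ξ x) + (x - u (ξ x)) := by abel
    rw [hPsi]
    conv_lhs => rw [h]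
    rw [map_add, LinearMap.add_apply, hBu' w _ (hdecomp x), add_zero]
  -- membership in perpY in terms of B
  have hperp : ∀ x : X, x ∈ perpY S Y ↔ ∀ y ∈ Y, B x y = 0 := by
    intro x
    constructor
    · intro hx y hy; rw [hB]; exact hx y hy
    · intro hx y hy; rw [← hB]; exact hx y hy
  -- every x decomposes as (element of Y) + (element of perpY)
  have hcompl : ∀ x : X, ∃ y ∈ Y, x - y ∈ perpY S Y := by
    intro x
    set m : Y →ₗ[F] Module.Dual F Y := B.compl₁₂ Y.subtype Y.subtype with hmdef
    have hm : ∀ (a b : Y), m a b = B a.1 b.1 := fun a b => rfl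
    have hminj : Function.Injective m := by
      rw [← LinearMap.ker_eq_bot, LinearMap.ker_eq_bot']
      intro a ha
      have : (a : X) = 0 := by
        apply hYnd a.1 a.2
        intro z hz
        have := congrFun (congrArg DFunLike.coe ha) ⟨z, hz⟩
        rw [hm] at this
        rw [← hB]
        exact this
      exact Subtype.ext this
    have hmsurj : Function.Surjective m := by
      rw [← LinearMap.injective_iff_surjective_of_finrank_eq_finrank
        Subspace.dual_finrank_eq.symm]
      exact hminj
    obtain ⟨a, ha⟩ := hmsurj ((B x) ∘ₗ Y.subtype)
    refine ⟨a.1, a.2, ?_⟩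
    rw [hperp]
    intro z hz
    have := congrFun (congrArg DFunLike.coe ha) ⟨z, hz⟩
    rw [hm] at this
    simp only [LinearMap.comp_apply, Submodule.subtype_apply] at this
    rw [map_sub, LinearMap.sub_apply, this, sub_self]
  -- ker ξ = perpY
  have hkerperp : ∀ x : X, ξ x = 0 → x ∈ perpY S Y := by
    intro x hx
    obtain ⟨y, hyY, hp⟩ := hcompl x
    have hξy : ξ y = 0 := by
      have h1 : ξ (x - y) = 0 := hker _ hp
      rw [map_sub, hx, zero_sub, neg_eq_zero] at h1
      exact h1
    have : y = 0 := hinj y hyY hξy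
    rw [this, sub_zero] at hp
    exact hp
  -- key lemma: for h fixing perpY, ξ (h (u (ξ x))) = ξ (h x)
  have key : ∀ (h : X ≃ₗ[F] X), (∀ x ∈ perpY S Y, h x = x) → ∀ x : X,
      ξ (h (u (ξ x))) = ξ (h x) := by
    intro h hfix x
    have h1 : h x - h (u (ξ x)) = x - u (ξ x) := by
      rw [← map_sub]
      exact hfix _ (hkerperp _ (hdecomp x))
    have h2 : ξ (h x) - ξ (h (u (ξ x))) = 0 := by
      rw [← map_sub, h1, hdecomp]
    exact (sub_eq_zero.mp h2).symm
  -- translate IsHY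
  have hIB : ∀ (h : X ≃ₗ[F] X), IsHY S Y h → ∀ x y : X, B (h x) (h y) = B x y := by
    intro h hh x y
    rw [hB, hB]
    exact hh.1 x y
  -- Xi unfolding
  have hXi : ∀ (h : X ≃ₗ[F] X) (w : W), Xi ξ ξs ue h.toLinearMap w = ξ (h (u w)) :=
    fun _ _ => rfl
  -- inverse is in HY
  have hHYsymm : ∀ (h : X ≃ₗ[F] X), IsHY S Y h → IsHY S Y h.symm := by
    intro h hh
    constructor
    · intro x y
      have := hh.1 (h.symm x) (h.symm y)
      simpa using this.symm
    · intro x hx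
      have := hh.2 x hx
      conv_lhs => rw [← this]
      simp
  -- group homomorphism property (needs only that h₁ fixes perpY)
  have hom : ∀ (h₁ h₂ : X ≃ₗ[F] X), (∀ x ∈ perpY S Y, h₁ x = x) →
      Xi ξ ξs ue (h₁.toLinearMap ∘ₗ h₂.toLinearMap)
        = Xi ξ ξs ue h₁.toLinearMap ∘ₗ Xi ξ ξs ue h₂.toLinearMap := by
    intro h₁ h₂ hfix₁
    apply LinearMap.ext
    intro w
    show ξ (h₁ (h₂ (u w))) = ξ (h₁ (u (ξ (h₂ (u w)))))
    exact (key h₁ hfix₁ (h₂ (u w))).symm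
  refine ⟨⟨?_, ?_⟩, ?_, ?_, ?_, ?_⟩
  -- left nondegeneracy of PsiW
  · intro w hw
    have h1 : u w = 0 := by
      apply hBleft
      intro x
      rw [hBux, hw]
    have := huξ w
    rw [h1, map_zero] at this
    exact this.symm
  -- right nondegeneracy
  · intro w hw
    have h1 : u w = 0 := by
      apply hBright
      intro x
      rw [hBxu, hw]
    have := huξ w
    rw [h1, map_zero] at this
    exact this.symm
  -- Ξ maps HY into Isom
  · intro h hh
    constructor
    · intro w₁ w₂
      rw [hPsi, hXi, hXi]
      set a := h (u w₁) with hadef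
      set b := h (u w₂) with hbdef
      have hra : ξ (a - u (ξ a)) = 0 := hdecomp a
      have hrb : ξ (b - u (ξ b)) = 0 := hdecomp b
      have e1 : B (u (ξ a)) (u (ξ b)) = B (u (ξ a)) b := by
        have hsplit : b = u (ξ b) + (b - u (ξ b)) := by abel
        conv_rhs => rw [hsplit]
        rw [map_add, hBu _ _ hrb, add_zero]
      have e2 : B (u (ξ a)) b = B a b - B (a - u (ξ a)) b := by
        have hsplit : a - (a - u (ξ a)) = u (ξ a) := by abel
        conv_lhs => rw [← hsplit]
        rw [map_sub, LinearMap.sub_apply]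
      have e3 : B (a - u (ξ a)) b = 0 := by
        have hfixed : h (a - u (ξ a)) = a - u (ξ a) := hh.2 _ (hkerperp _ hra)
        calc B (a - u (ξ a)) b = B (h (a - u (ξ a))) (h (u w₂)) := by rw [hfixed, hbdef]
          _ = B (a - u (ξ a)) (u w₂) := hIB h hh _ _
          _ = 0 := hBu' _ _ hra
      rw [e1, e2, e3, sub_zero, hadef, hbdef, hIB h hh, ← hPsi]
    · -- bijectivity: Ξ(h.symm) is a two-sided inverse
      have hL : ∀ w : W, Xi ξ ξs ue h.toLinearMap (Xi ξ ξs ue h.symm.toLinearMap w) = w := by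
        intro w
        rw [hXi, hXi]
        rw [key h hh.2 (h.symm (u w))]
        simp [huξ]
      have hR : ∀ w : W, Xi ξ ξs ue h.symm.toLinearMap (Xi ξ ξs ue h.toLinearMap w) = w := by
        intro w
        rw [hXi, hXi]
        rw [key h.symm (hHYsymm h hh).2 (h (u w))]
        simp [huξ]
      exact Function.bijective_iff_has_inverse.mpr
        ⟨Xi ξ ξs ue h.symm.toLinearMap, hR, hL⟩
  -- group homomorphism
  · intro h₁ h₂ hh₁ _
    exact hom h₁ h₂ hh₁.2
  -- injectivity
  · intro h₁ h₂ hh₁ hh₂ heq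
    apply LinearEquiv.ext
    intro x
    -- reduce to showing h₁ and h₂ agree on im u and on perpY
    have hmain : ∀ w : W, h₁ (u w) = h₂ (u w) := by
      intro w
      set d := h₁ (u w) - h₂ (u w) with hddef
      have hξd : ξ d = 0 := by
        have := congrFun (congrArg DFunLike.coe heq) w
        rw [hXi, hXi] at this
        rw [hddef, map_sub, this, sub_self]
      -- show B z d = 0 for all z
      have hzd : ∀ z : X, B z d = 0 := by
        intro z
        obtain ⟨z', rfl⟩ := h₁.surjective z
        set z'' := h₂.symm (h₁ z') with hzdef
        have hz'' : h₂ z'' = h₁ z' := by simp [hzdef]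
        have hc : ξ (z' - z'') = 0 := by
          -- ξ z'' = ξ z'
          have k1 : ξ (h₁ z') = ξ (h₂ z') := by
            have e1 := key h₁ hh₁.2 z'
            have e2 := key h₂ hh₂.2 z'
            have e3 : ξ (h₁ (u (ξ z'))) = ξ (h₂ (u (ξ z'))) := by
              have := congrFun (congrArg DFunLike.coe heq) (ξ z')
              rw [hXi, hXi] at this
              exact this
            rw [← e1, e3, e2]
          have k2 : ξ z'' = ξ (h₂.symm (u (ξ (h₁ z')))) := (key h₂.symm (hHYsymm h₂ hh₂).2 (h₁ z')).symm
          have k3 : ξ (h₂.symm (u (ξ (h₂ z')))) = ξ (h₂.symm (h₂ z')) := key h₂.symm (hHYsymm h₂ hh₂).2 (h₂ z')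
          have k4 : ξ z'' = ξ z' := by
            rw [k2, k1, k3]; simp
          rw [map_sub, k4, sub_self]
        have hb1 : B (h₁ z') (h₁ (u w)) = B z' (u w) := hIB h₁ hh₁ _ _
        have hb2 : B (h₁ z') (h₂ (u w)) = B z'' (u w) := by
          rw [← hz'']; exact hIB h₂ hh₂ _ _
        rw [hddef, map_sub, hb1, hb2]
        have : B z' (u w) - B z'' (u w) = B (z' - z'') (u w) := by
          rw [map_sub, LinearMap.sub_apply]
        rw [this]
        exact hBu' _ _ hc
      have hd0 : d = 0 := hBleft d fun y => hflip _ _ (hzd y)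
      exact sub_eq_zero.mp hd0
    -- now decompose x
    have hsplit : x = u (ξ x) + (x - u (ξ x)) := by abel
    have hfix : h₁ (x - u (ξ x)) = h₂ (x - u (ξ x)) := by
      rw [hh₁.2 _ (hkerperp _ (hdecomp x)), hh₂.2 _ (hkerperp _ (hdecomp x))]
    conv_lhs => rw [hsplit]
    conv_rhs => rw [hsplit]
    rw [map_add, map_add, hmain (ξ x), hfix]
  -- surjectivity
  · intro g hg
    set hlin : X →ₗ[F] X := u ∘ₗ g.toLinearMap ∘ₗ ξ + (LinearMap.id - u ∘ₗ ξ) with hlindef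
    set hinvl : X →ₗ[F] X := u ∘ₗ g.symm.toLinearMap ∘ₗ ξ + (LinearMap.id - u ∘ₗ ξ) with hinvdef
    have happ : ∀ x : X, hlin x = u (g (ξ x)) + (x - u (ξ x)) := fun x => rfl
    have happ' : ∀ x : X, hinvl x = u (g.symm (ξ x)) + (x - u (ξ x)) := fun x => rfl
    have hξlin : ∀ x : X, ξ (hlin x) = g (ξ x) := by
      intro x
      rw [happ, map_add, map_sub, huξ, huξ, sub_self, add_zero]
    have hξinv : ∀ x : X, ξ (hinvl x) = g.symm (ξ x) := by
      intro x
      rw [happ', map_add, map_sub, huξ, huξ, sub_self, add_zero]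
    have hli : hlin ∘ₗ hinvl = LinearMap.id := by
      apply LinearMap.ext
      intro x
      rw [LinearMap.comp_apply, happ, hξinv, LinearEquiv.apply_symm_apply, happ']
      simp only [LinearMap.id_apply, hξinv]
      abel
    have hri : hinvl ∘ₗ hlin = LinearMap.id := by
      apply LinearMap.ext
      intro x
      rw [LinearMap.comp_apply, happ', hξlin, LinearEquiv.symm_apply_apply, happ]
      simp only [LinearMap.id_apply, hξlin]
      abel
    set h : X ≃ₗ[F] X := LinearEquiv.ofLinear hlin hinvl hli hri with hhdef
    have hcoe : ∀ x : X, h x = hlin x := fun x => rfl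
    have hHY : IsHY S Y h := by
      constructor
      · intro x y
        rw [← hB, ← hB, hcoe, hcoe, happ, happ]
        set rx := x - u (ξ x) with hrx
        set ry := y - u (ξ y) with hry
        have hξrx : ξ rx = 0 := hdecomp x
        have hξry : ξ ry = 0 := hdecomp y
        have e1 : B (u (g (ξ x)) + rx) (u (g (ξ y)) + ry)
            = B (u (g (ξ x))) (u (g (ξ y))) + B rx ry := by
          simp only [map_add, LinearMap.add_apply, hBu _ _ hξry, hBu' _ _ hξrx,
            add_zero, zero_add]
        have e2 : B x y = B (u (ξ x)) (u (ξ y)) + B rx ry := by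
          have hx : x = u (ξ x) + rx := by rw [hrx]; abel
          have hy : y = u (ξ y) + ry := by rw [hry]; abel
          conv_lhs => rw [hx, hy]
          simp only [map_add, LinearMap.add_apply, hBu _ _ hξry, hBu' _ _ hξrx,
            add_zero, zero_add]
        rw [e1, e2, ← hPsi, ← hPsi, hg]
      · intro x hx
        have hξx : ξ x = 0 := hker x hx
        rw [hcoe, happ, hξx]
        simp
    refine ⟨h, hHY, ?_⟩
    apply LinearMap.ext
    intro w
    rw [hXi]
    show ξ (h (u w)) = g w
    rw [hcoe, hξlin, huξ]
end

section
/- Let τ: End(W) → End(W) be the anti-involution τ(A) = υ^{−1}A*υ (the adjoint with respect to Ψ_W). For h ∈ Isom(X) stabilizing Y with (h−1)|_Y invertible, set h_G = (Ξ(h−1))^{−1} ∈ GL(W). Then: (i) 1 + h_G + τ(h_G) = 0; and (ii) h_G · θ(h_G) = −Ξ(h^{−1}), where θ(g) = τ(g)^{−1}. -/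
/-!
Write `p = ξ⁺ = ξs ∘ ue` and `Ξ(A) = ξ ∘ A ∘ p`. The image of `p` is orthogonal to `ker ξ`, which
by a dimension count is `Y^⊥` and hence stable under `h⁻¹`. Consequently `Ξ(A) Ξ(A') = Ξ(A A')`
whenever `A` preserves `ker ξ`, and the `Ψ_W`-adjoint of `Ξ(A)` is `Ξ(A*)`. For `T = Ξ(h - 1)` this
gives `τ(T) = Ξ(h⁻¹ - 1)`, and `(h⁻¹ - 1)(h - 1) = -(h - 1) - (h⁻¹ - 1)` yields
`τ(T) T = -T - τ(T)`; evaluating on `h_G = T⁻¹` gives (i). For (ii), `Ξ(h) h_G = 1 + h_G`, so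
`Ξ(h⁻¹) (1 + h_G) = Ξ(h⁻¹ h) h_G = h_G`, while `τ(h_G) = -(1 + h_G)` by (i).
-/

open LinearMap Function Module

variable {F W X W' : Type} [Field F]
  [AddCommGroup W] [Module F W] [AddCommGroup X] [Module F X]
  [AddCommGroup W'] [Module F W']

section Compression

variable {R M N : Type*} [CommRing R] [AddCommGroup M] [Module R M] [AddCommGroup N] [Module R N]
  {ξ : M →ₗ[R] N} {p : N →ₗ[R] M}

/-- The paper's `Ξ(A)`, with an arbitrary map `p` in place of `ξ⁺`. -/
def compress (ξ : M →ₗ[R] N) (p : N →ₗ[R] M) (A : M →ₗ[R] M) : N →ₗ[R] N :=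
  ξ ∘ₗ A ∘ₗ p

@[simp]
lemma compress_apply (A : M →ₗ[R] M) (w : N) : compress ξ p A w = ξ (A (p w)) := rfl

lemma apply_sub_section_apply (hp : LeftInverse ξ p) (x : M) : ξ (x - p (ξ x)) = 0 := by
  rw [map_sub, hp, sub_self]

lemma apply_section_apply_of_mapsTo_ker (hp : LeftInverse ξ p) {A : M →ₗ[R] M}
    (hA : ∀ x, ξ x = 0 → ξ (A x) = 0) (x : M) : ξ (A (p (ξ x))) = ξ (A x) := by
  have := hA _ (apply_sub_section_apply hp x)
  rwa [map_sub, map_sub, sub_eq_zero, eq_comm] at this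

lemma compress_comp_compress (hp : LeftInverse ξ p) {A : M →ₗ[R] M}
    (hA : ∀ x, ξ x = 0 → ξ (A x) = 0) (A' : M →ₗ[R] M) :
    compress ξ p A ∘ₗ compress ξ p A' = compress ξ p (A ∘ₗ A') := by
  ext w
  exact apply_section_apply_of_mapsTo_ker hp hA _

variable {B : LinearMap.BilinForm R M}

lemma apply_section_right (hp : LeftInverse ξ p) (horth : ∀ w x, ξ x = 0 → B (p w) x = 0)
    (w : N) (x : M) : B (p w) (p (ξ x)) = B (p w) x := by
  have := horth w _ (apply_sub_section_apply hp x)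
  rwa [map_sub, sub_eq_zero, eq_comm] at this

lemma apply_section_left (hp : LeftInverse ξ p) (hB : B.IsRefl)
    (horth : ∀ w x, ξ x = 0 → B (p w) x = 0) (x : M) (w : N) :
    B (p (ξ x)) (p w) = B x (p w) := by
  have := hB _ _ (horth w _ (apply_sub_section_apply hp x))
  rwa [map_sub, LinearMap.sub_apply, sub_eq_zero, eq_comm] at this

lemma isAdjointPair_compress (hp : LeftInverse ξ p) (hB : B.IsRefl)
    (horth : ∀ w x, ξ x = 0 → B (p w) x = 0) {A A' : M →ₗ[R] M}
    (hA : IsAdjointPair B B A A') :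
    IsAdjointPair (B.compl₁₂ p p) (B.compl₁₂ p p) (compress ξ p A) (compress ξ p A') := by
  intro u v
  simp only [compl₁₂_apply, compress_apply]
  rw [apply_section_left hp hB horth, hA, apply_section_right hp horth]

lemma separatingLeft_compl₁₂_section (hp : LeftInverse ξ p)
    (horth : ∀ w x, ξ x = 0 → B (p w) x = 0) (hB : B.SeparatingLeft) :
    (B.compl₁₂ p p).SeparatingLeft := by
  intro u hu
  have hpu : p u = 0 := hB _ fun x => by
    rw [← apply_section_right hp horth]
    exact hu (ξ x)
  rw [← hp u, hpu, map_zero]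

end Compression

section Cayley

variable {R M N : Type*} [CommRing R] [AddCommGroup M] [Module R M] [AddCommGroup N] [Module R N]
  {B : LinearMap.BilinForm R M} {ξ : M →ₗ[R] N} {p : N →ₗ[R] M} {h : M ≃ₗ[R] M}

lemma compress_symm_sub_id_apply_compress (hp : LeftInverse ξ p)
    (hker : ∀ x, ξ x = 0 → ξ (h.symm x) = 0) (v : N) :
    compress ξ p (h.symm.toLinearMap - LinearMap.id) (compress ξ p (h.toLinearMap - LinearMap.id) v)
      = -compress ξ p (h.toLinearMap - LinearMap.id) v
        - compress ξ p (h.symm.toLinearMap - LinearMap.id) v := by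
  have hA : ∀ x, ξ x = 0 → ξ ((h.symm.toLinearMap - LinearMap.id : M →ₗ[R] M) x) = 0 :=
    fun x hx => by simp [hker x hx, hx]
  rw [← LinearMap.comp_apply, compress_comp_compress hp hA]
  simp only [compress_apply, LinearMap.comp_apply, LinearMap.sub_apply, LinearEquiv.coe_coe,
    LinearMap.id_apply, map_sub, LinearEquiv.symm_apply_apply]
  abel

lemma compl₁₂_compress_sub_id (hp : LeftInverse ξ p) (hB : B.IsRefl)
    (horth : ∀ w x, ξ x = 0 → B (p w) x = 0) (hh : B.IsOrthogonal h)
    (hker : ∀ x, ξ x = 0 → ξ (h.symm x) = 0) (u v : N) :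
    let T := compress ξ p (h.toLinearMap - LinearMap.id)
    B.compl₁₂ p p (T u) (T v) + B.compl₁₂ p p u (T v) + B.compl₁₂ p p (T u) v = 0 := by
  intro T
  have hadj : IsAdjointPair (B.compl₁₂ p p) (B.compl₁₂ p p) T
      (compress ξ p (h.symm.toLinearMap - LinearMap.id)) :=
    isAdjointPair_compress hp hB horth
      (IsAdjointPair.sub (fun x y => by simpa using hh x (h.symm y)) isAdjointPair_id)
  rw [hadj, compress_symm_sub_id_apply_compress hp hker, map_sub, map_neg, ← hadj]
  ring

lemma id_add_add_eq_zero_of_compl₁₂_apply (hp : LeftInverse ξ p) (hB : B.IsRefl)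
    (hsep : B.SeparatingLeft) (horth : ∀ w x, ξ x = 0 → B (p w) x = 0) (hh : B.IsOrthogonal h)
    (hker : ∀ x, ξ x = 0 → ξ (h.symm x) = 0) {g τ : N →ₗ[R] N}
    (hg : compress ξ p (h.toLinearMap - LinearMap.id) ∘ₗ g = LinearMap.id)
    (hτ : ∀ w₁ w₂, B.compl₁₂ p p (τ w₁) w₂ = B.compl₁₂ p p w₁ (g w₂)) :
    LinearMap.id + g + τ = 0 := by
  ext w
  refine separatingLeft_compl₁₂_section hp horth hsep _ fun w₂ => ?_
  have key := compl₁₂_compress_sub_id hp hB horth hh hker (g w) (g w₂)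
  simp only [← LinearMap.comp_apply, hg, LinearMap.id_apply] at key
  simp only [LinearMap.add_apply, LinearMap.id_apply, map_add, hτ]
  linear_combination key

lemma comp_symm_eq_neg_compress_symm (hp : LeftInverse ξ p)
    (hker : ∀ x, ξ x = 0 → ξ (h.symm x) = 0) {g : N →ₗ[R] N} {τ : N ≃ₗ[R] N}
    (hg : compress ξ p (h.toLinearMap - LinearMap.id) ∘ₗ g = LinearMap.id)
    (hτ : LinearMap.id + g + τ.toLinearMap = 0) :
    g ∘ₗ τ.symm.toLinearMap = -compress ξ p h.symm.toLinearMap := by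
  have hh : ∀ v, compress ξ p h.toLinearMap (g v) = v + g v := fun v => by
    simpa [sub_eq_iff_eq_add, hp (g v)] using LinearMap.congr_fun hg v
  have hsymm : ∀ v, compress ξ p h.symm.toLinearMap (v + g v) = g v := fun v => by
    rw [← hh, ← LinearMap.comp_apply, compress_comp_compress hp hker]
    simp [hp (g v)]
  ext w
  obtain ⟨v, rfl⟩ := τ.surjective w
  have hτv : τ v = -(v + g v) := by
    simpa [add_eq_zero_iff_eq_neg'] using LinearMap.congr_fun hτ v
  rw [LinearMap.comp_apply, LinearEquiv.coe_coe, τ.symm_apply_apply, LinearMap.neg_apply, hτv,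
    map_neg, hsymm, neg_neg]

end Cayley

lemma LinearMap.BilinForm.IsOrthogonal.symm_mem_orthogonal {R M : Type*} [CommRing R]
    [AddCommGroup M] [Module R M] {B : LinearMap.BilinForm R M} {h : M ≃ₗ[R] M}
    (hh : B.IsOrthogonal h) {Y : Submodule R M} (hY : Y.map h.toLinearMap = Y) {x : M}
    (hx : x ∈ B.orthogonal Y) : h.symm x ∈ B.orthogonal Y := fun y hy => by
  have hhy : h y ∈ Y := hY ▸ Submodule.mem_map_of_mem hy
  have := hh y (h.symm x)
  rw [h.apply_symm_apply] at this
  change B y (h.symm x) = 0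
  rw [← this]
  exact hx _ hhy

lemma LinearMap.BilinForm.ker_eq_orthogonal_of_finrank_eq {K V U : Type*} [Field K]
    [AddCommGroup V] [Module K V] [FiniteDimensional K V] [AddCommGroup U] [Module K U]
    {B : LinearMap.BilinForm K V} (hB : B.Nondegenerate) {Y : Submodule K V} {ξ : V →ₗ[K] U}
    (hξ : Surjective ξ) (hle : B.orthogonal Y ≤ ker ξ) (hdim : finrank K Y = finrank K U) :
    ker ξ = B.orthogonal Y := by
  refine (Submodule.eq_of_le_of_finrank_eq hle ?_).symm
  have hrank := LinearMap.finrank_range_add_finrank_ker ξ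
  rw [range_eq_top.mpr hξ, finrank_top] at hrank
  rw [B.finrank_orthogonal hB, hdim]
  omega

namespace GSSetup

variable (S : GSSetup F W X W')

def formX : LinearMap.BilinForm F X :=
  S.Φ.compl₁₂ (LinearMap.inr F W (X × W') ∘ₗ LinearMap.inl F X W')
    (LinearMap.inr F W (X × W') ∘ₗ LinearMap.inl F X W')

lemma formX_apply (x y : X) : S.formX x y = S.Φ (0, x, 0) (0, y, 0) := rfl

lemma formX_isRefl : S.formX.IsRefl := by
  intro x y hxy
  rcases S.symm_or_alt with hsymm | halt
  · rwa [formX_apply, hsymm, ← formX_apply]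
  · rwa [formX_apply, halt, neg_eq_zero, ← formX_apply]

lemma formX_nondegenerate : S.formX.Nondegenerate := by
  refine S.formX_isRefl.nondegenerate_iff_separatingLeft.mpr fun x hx => ?_
  have h0 : ((0 : W), x, (0 : W')) = 0 := S.nondeg _ fun ⟨w, y, w'⟩ => by
    have hsplit : ((w, y, w') : W × X × W') = (0, y, 0) + (w, 0, w') := by simp
    rw [hsplit, map_add, ← formX_apply, hx y, S.orthX, add_zero]
  exact congrArg (fun v => v.2.1) h0

lemma perpY_eq_orthogonal (Y : Submodule F X) : perpY S Y = S.formX.orthogonal Y := by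
  ext x
  exact ⟨fun hx y hy => S.formX_isRefl _ _ (hx y hy), fun hx y hy => S.formX_isRefl _ _ (hx y hy)⟩

end GSSetup

theorem statement_11_general [FiniteDimensional F X]
    (S : GSSetup F W X W') (Y : Submodule F X)
    (hdim : Module.finrank F Y = Module.finrank F W)
    (ξ : X →ₗ[F] W)
    (hker : ∀ x ∈ perpY S Y, ξ x = 0)
    (ξs : W' →ₗ[F] X)
    (hξs : ∀ (w' : W') (x : X), S.Φ (0, ξs w', 0) (0, x, 0) = S.Φ (0, 0, w') (ξ x, 0, 0))
    (ue : W ≃ₗ[F] W')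
    (hue : ∀ w : W, ξ (ξs (ue w)) = w)
    -- `h ∈ Isom(X)` stabilizes `Y`
    (h : X ≃ₗ[F] X)
    (hiso : ∀ x y : X, S.Φ (0, h x, 0) (0, h y, 0) = S.Φ (0, x, 0) (0, y, 0))
    (hstab : Submodule.map h.toLinearMap Y = Y)
    -- `hGe` realises `h_G = (Ξ(h − 1))⁻¹`
    (hGe : W ≃ₗ[F] W)
    (hinv1 : Xi ξ ξs ue (h.toLinearMap - LinearMap.id) ∘ₗ hGe.toLinearMap = LinearMap.id)
    -- `τe` realises `τ(h_G)`, the `Ψ_W`-adjoint of `h_G`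
    (τe : W ≃ₗ[F] W)
    (hτ : ∀ w₁ w₂ : W, PsiW S ξs ue (τe w₁) w₂ = PsiW S ξs ue w₁ (hGe w₂)) :
    -- (i) `1 + h_G + τ(h_G) = 0`
    ((LinearMap.id : W →ₗ[F] W) + hGe.toLinearMap + τe.toLinearMap = 0)
    -- (ii) `h_G ∘ θ(h_G) = −Ξ(h⁻¹)` where `θ(g) = τ(g)⁻¹`
    ∧ (hGe.toLinearMap ∘ₗ τe.symm.toLinearMap = - Xi ξ ξs ue h.symm.toLinearMap) := by
  set p := ξs ∘ₗ ue.toLinearMap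
  have hp : LeftInverse ξ p := hue
  have horth : ∀ w x, ξ x = 0 → S.formX (p w) x = 0 := fun w x hx =>
    (hξs (ue w) x).trans (by rw [hx]; exact map_zero _)
  have hkerξ : ker ξ = S.formX.orthogonal Y :=
    LinearMap.BilinForm.ker_eq_orthogonal_of_finrank_eq S.formX_nondegenerate hp.surjective
      (fun x hx => hker x (S.perpY_eq_orthogonal Y ▸ hx)) hdim
  have hh : S.formX.IsOrthogonal h := hiso
  have hker_symm : ∀ x, ξ x = 0 → ξ (h.symm x) = 0 := fun x hx => by
    have hx' : x ∈ ker ξ := hx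
    rw [hkerξ] at hx'
    have := LinearMap.BilinForm.IsOrthogonal.symm_mem_orthogonal hh hstab hx'
    rwa [← hkerξ] at this
  have part_i : LinearMap.id + hGe.toLinearMap + τe.toLinearMap = 0 :=
    id_add_add_eq_zero_of_compl₁₂_apply hp S.formX_isRefl
      S.formX_nondegenerate.1 horth hh hker_symm hinv1 hτ
  exact ⟨part_i, comp_symm_eq_neg_compress_symm hp hker_symm hinv1 part_i⟩

/-- Let `τ` be the adjoint anti-involution of `End(W)` with respect to
`Ψ_W`, and `θ(g) = τ(g)⁻¹`.  For an isometry `h` of `X` stabilizing `Y` with `(h − 1)|_Y`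
invertible (so that `h_G = (Ξ(h − 1))⁻¹ ∈ GL(W)` exists, realised by the equivalence `hGe`):
(i) `1 + h_G + τ(h_G) = 0`; and (ii) `h_G · θ(h_G) = −Ξ(h⁻¹)`. -/
theorem statement_11 [FiniteDimensional F W] [FiniteDimensional F X] [FiniteDimensional F W']
    (S : GSSetup F W X W') (Y : Submodule F X)
    (hYnd : ∀ y ∈ Y, (∀ z ∈ Y, S.Φ (0, y, 0) (0, z, 0) = 0) → y = 0)
    (hdim : Module.finrank F Y = Module.finrank F W)
    (ξ : X →ₗ[F] W)
    (hker : ∀ x ∈ perpY S Y, ξ x = 0)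
    (hinj : ∀ x ∈ Y, ξ x = 0 → x = 0)
    (hsurj : ∀ w : W, ∃ x ∈ Y, ξ x = w)
    (ξs : W' →ₗ[F] X)
    (hξs : ∀ (w' : W') (x : X), S.Φ (0, ξs w', 0) (0, x, 0) = S.Φ (0, 0, w') (ξ x, 0, 0))
    (ue : W ≃ₗ[F] W')
    (hue : ∀ w : W, ξ (ξs (ue w)) = w) (hue' : ∀ w' : W', ue (ξ (ξs w')) = w')
    -- `h ∈ Isom(X)` stabilizes `Y`
    (h : X ≃ₗ[F] X)
    (hiso : ∀ x y : X, S.Φ (0, h x, 0) (0, h y, 0) = S.Φ (0, x, 0) (0, y, 0))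
    (hstab : Submodule.map h.toLinearMap Y = Y)
    -- `hGe` realises `h_G = (Ξ(h − 1))⁻¹`
    (hGe : W ≃ₗ[F] W)
    (hinv1 : Xi ξ ξs ue (h.toLinearMap - LinearMap.id) ∘ₗ hGe.toLinearMap = LinearMap.id)
    (hinv2 : hGe.toLinearMap ∘ₗ Xi ξ ξs ue (h.toLinearMap - LinearMap.id) = LinearMap.id)
    -- `τe` realises `τ(h_G)`, the `Ψ_W`-adjoint of `h_G`
    (τe : W ≃ₗ[F] W)
    (hτ : ∀ w₁ w₂ : W, PsiW S ξs ue (τe w₁) w₂ = PsiW S ξs ue w₁ (hGe w₂)) :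
    -- (i) `1 + h_G + τ(h_G) = 0`
    ((LinearMap.id : W →ₗ[F] W) + hGe.toLinearMap + τe.toLinearMap = 0)
    -- (ii) `h_G ∘ θ(h_G) = −Ξ(h⁻¹)` where `θ(g) = τ(g)⁻¹`
    ∧ (hGe.toLinearMap ∘ₗ τe.symm.toLinearMap = - Xi ξ ξs ue h.symm.toLinearMap) :=
  statement_11_general S Y hdim ξ hker ξs hξs ue hue h hiso hstab hGe hinv1 τe hτ
end
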